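/- arXiv:1409.0342 — 2 statements merged into one kernel-verified Lean document; each statement's English description precedes it below -/
import Mathlib

section
/- Operator convexity bound for the matrix exponential (key lemma in the proof of the noncommutative Azuma inequality). Let y ∈ M_d(ℂ) be Hermitian, c > 0, and t ∈ ℝ with t > 0. If −c·I ≤ y ≤ c·I, then exp(t·y) ≤ ((e^{tc} − e^{−tc})/(2c))·y + ((e^{tc} + e^{−tc})/2)·I. -/
/-! Both sides are functions of `y` in the continuous functional calculus: `exp (t y)` is
`cfc (s ↦ e^{ts}) y` and the right-hand side is `cfc` of the chord of `s ↦ e^{ts}` over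
`[-c, c]`. The spectrum of `y` lies in `[-c, c]`, where the convex function lies below its chord,
so monotonicity of `cfc` gives the inequality. -/

namespace NCAzuma

open Matrix
open scoped ComplexOrder

/-- `Prob(x ≥ t)`: the normalized count `(1/d)·#{i : λ_i(x) ≥ t}` of eigenvalues of a
Hermitian matrix `x` that are `≥ t`. -/
noncomputable def probGE (d : ℕ) (x : Matrix (Fin d) (Fin d) ℂ) (t : ℝ) : ℝ :=
  if hx : x.IsHermitian then
    ((Finset.univ.filter fun i => t ≤ hx.eigenvalues i).card : ℝ) / d
  else 0

/-- `Prob(|x| ≥ t)`: the normalized count `(1/d)·#{i : |λ_i(x)| ≥ t}`. -/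
noncomputable def probAbsGE (d : ℕ) (x : Matrix (Fin d) (Fin d) ℂ) (t : ℝ) : ℝ :=
  if hx : x.IsHermitian then
    ((Finset.univ.filter fun i => t ≤ |hx.eigenvalues i|).card : ℝ) / d
  else 0

/-- The Loewner order on matrices: `Loewner x y` means `x ≤ y`, i.e. `y - x` is
positive semidefinite. -/
def Loewner {d : ℕ} (x y : Matrix (Fin d) (Fin d) ℂ) : Prop := (y - x).PosSemidef

/-- A conditional expectation on `M_d(ℂ)`: a ℂ-linear, positive, unital, trace-preserving
map satisfying the bimodule property over its range. -/
structure CondExp (d : ℕ) where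
  toFun : Matrix (Fin d) (Fin d) ℂ → Matrix (Fin d) (Fin d) ℂ
  map_add : ∀ x y, toFun (x + y) = toFun x + toFun y
  map_smul : ∀ (c : ℂ) (x), toFun (c • x) = c • toFun x
  pos : ∀ x, x.PosSemidef → (toFun x).PosSemidef
  unital : toFun 1 = 1
  trace_pres : ∀ x, (toFun x).trace = x.trace
  bimodule : ∀ a x b, toFun a = a → toFun b = b → toFun (a * x * b) = a * toFun x * b

/-- A filtration `E_0, …, E_n`: `E_i ∘ E_j = E_j ∘ E_i = E_{min(i,j)}`. -/
def IsFiltration {d : ℕ} (n : ℕ) (E : ℕ → CondExp d) : Prop :=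
  ∀ i ≤ n, ∀ j ≤ n, ∀ x, (E i).toFun ((E j).toFun x) = (E (min i j)).toFun x

/-- A Hermitian martingale `(x_j)_{0≤j≤n}` with respect to the filtration `(E_j)`:
each `x_j` is Hermitian with `E_j(x_j) = x_j`, and `E_j(x_{j+1}) = x_j`. -/
def IsHermMartingale {d : ℕ} (n : ℕ) (E : ℕ → CondExp d)
    (x : ℕ → Matrix (Fin d) (Fin d) ℂ) : Prop :=
  (∀ j ≤ n, (x j).IsHermitian) ∧ (∀ j ≤ n, (E j).toFun (x j) = x j) ∧
  (∀ j < n, (E j).toFun (x (j + 1)) = x j)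

/-- A Hermitian supermartingale `(x_j)_{0≤j≤n}`: `E_j(x_{j+1}) ≤ x_j` in the Loewner order. -/
def IsHermSupermartingale {d : ℕ} (n : ℕ) (E : ℕ → CondExp d)
    (x : ℕ → Matrix (Fin d) (Fin d) ℂ) : Prop :=
  (∀ j ≤ n, (x j).IsHermitian) ∧ (∀ j ≤ n, (E j).toFun (x j) = x j) ∧
  (∀ j < n, Loewner ((E j).toFun (x (j + 1))) (x j))

/-- The matrix exponential. -/
noncomputable def mexp {d : ℕ} (x : Matrix (Fin d) (Fin d) ℂ) : Matrix (Fin d) (Fin d) ℂ :=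
  NormedSpace.exp x

/-- The operator norm of a Hermitian matrix: `max_i |λ_i(x)|`. -/
noncomputable def opNorm (d : ℕ) (x : Matrix (Fin d) (Fin d) ℂ) : ℝ :=
  if hx : x.IsHermitian then
    if hd : (Finset.univ : Finset (Fin d)).Nonempty then
      Finset.univ.sup' hd fun i => |hx.eigenvalues i|
    else 0
  else 0

/-- The `L_p`-norm with respect to the normalized trace:
`‖x‖_p = ((1/d)·∑_i |λ_i(x)|^p)^(1/p)` for Hermitian `x`. -/
noncomputable def pNorm (d : ℕ) (p : ℝ) (x : Matrix (Fin d) (Fin d) ℂ) : ℝ :=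
  if hx : x.IsHermitian then
    ((∑ i, |hx.eigenvalues i| ^ p) / d) ^ (1 / p)
  else 0

theorem _root_.ConvexOn.le_chord_of_mem_Icc_neg {f : ℝ → ℝ} {c s : ℝ}
    (hf : ConvexOn ℝ (Set.Icc (-c) c) f) (hc : 0 < c) (hs : s ∈ Set.Icc (-c) c) :
    f s ≤ (f c - f (-c)) / (2 * c) * s + (f c + f (-c)) / 2 := by
  set θ := (c + s) / (2 * c)
  have hθ₀ : 0 ≤ θ := div_nonneg (by linarith [hs.1]) (by linarith)
  have hθ₁ : 0 ≤ 1 - θ := by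
    rw [sub_nonneg, div_le_one (by linarith)]
    linarith [hs.2]
  have hs_combo : θ • c + (1 - θ) • -c = s := by
    simp only [smul_eq_mul, θ]
    field_simp
    ring
  calc f s = f (θ • c + (1 - θ) • -c) := by rw [hs_combo]
    _ ≤ θ • f c + (1 - θ) • f (-c) :=
      hf.2 ⟨by linarith, le_rfl⟩ ⟨le_rfl, by linarith⟩ hθ₀ hθ₁ (by ring)
    _ = (f c - f (-c)) / (2 * c) * s + (f c + f (-c)) / 2 := by
      simp only [smul_eq_mul, θ]
      field_simp
      ring

open scoped MatrixOrder Matrix.Norms.L2Operator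

lemma ofReal_smul_one_eq_algebraMap {n : Type*} [Fintype n] [DecidableEq n] (c : ℝ) :
    (c : ℂ) • (1 : Matrix n n ℂ) = algebraMap ℝ (Matrix n n ℂ) c := by
  rw [Algebra.algebraMap_eq_smul_one, Complex.coe_smul]

lemma loewner_iff_le {d : ℕ} {x y : Matrix (Fin d) (Fin d) ℂ} : Loewner x y ↔ x ≤ y := Iff.rfl

lemma spectrum_subset_Icc_of_loewner {d : ℕ} {y : Matrix (Fin d) (Fin d) ℂ}
    (hy : y.IsHermitian) {c : ℝ}
    (hlow : Loewner (-((c : ℂ) • (1 : Matrix (Fin d) (Fin d) ℂ))) y)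
    (hupp : Loewner y ((c : ℂ) • (1 : Matrix (Fin d) (Fin d) ℂ))) :
    spectrum ℝ y ⊆ Set.Icc (-c) c := by
  rw [loewner_iff_le, ofReal_smul_one_eq_algebraMap, ← map_neg] at hlow
  rw [loewner_iff_le, ofReal_smul_one_eq_algebraMap] at hupp
  exact fun s hs => ⟨(algebraMap_le_iff_le_spectrum hy.isSelfAdjoint).1 hlow s hs,
    (le_algebraMap_iff_spectrum_le hy.isSelfAdjoint).1 hupp s hs⟩

lemma mexp_ofReal_smul_eq_cfc {d : ℕ} {y : Matrix (Fin d) (Fin d) ℂ} (hy : y.IsHermitian)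
    (t : ℝ) : mexp ((t : ℂ) • y) = cfc (fun s => Real.exp (t * s)) y := by
  rw [mexp, Complex.coe_smul, ← CFC.real_exp_eq_normedSpace_exp, ← cfc_comp_smul t Real.exp y]
  rfl

theorem exp_loewner_convexity_bound_general {d : ℕ}
    (y : Matrix (Fin d) (Fin d) ℂ) (hy : y.IsHermitian)
    (c t : ℝ) (hc : 0 < c)
    (hlow : Loewner (-((c : ℂ) • (1 : Matrix (Fin d) (Fin d) ℂ))) y)
    (hupp : Loewner y ((c : ℂ) • (1 : Matrix (Fin d) (Fin d) ℂ))) :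
    Loewner (mexp ((t : ℂ) • y))
      ((((Real.exp (t * c) - Real.exp (-(t * c))) / (2 * c) : ℝ) : ℂ) • y +
        (((Real.exp (t * c) + Real.exp (-(t * c))) / 2 : ℝ) : ℂ) •
          (1 : Matrix (Fin d) (Fin d) ℂ)) := by
  set a := (Real.exp (t * c) - Real.exp (-(t * c))) / (2 * c)
  set b := (Real.exp (t * c) + Real.exp (-(t * c))) / 2
  have hspec := spectrum_subset_Icc_of_loewner hy hlow hupp
  have hrhs : (a : ℂ) • y + (b : ℂ) • (1 : Matrix (Fin d) (Fin d) ℂ) =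
      cfc (fun s => a * s + b) y := by
    rw [cfc_add .., cfc_const_mul_id .., cfc_const .., ofReal_smul_one_eq_algebraMap,
      Complex.coe_smul]
  have hconvex : ConvexOn ℝ (Set.Icc (-c) c) fun s => Real.exp (t * s) :=
    (convexOn_exp.comp_linearMap (LinearMap.mul ℝ ℝ t)).subset (Set.subset_univ _)
      (convex_Icc _ _)
  rw [loewner_iff_le, mexp_ofReal_smul_eq_cfc hy, hrhs]
  refine cfc_mono fun s hs => ?_
  simpa [a, b, mul_neg] using hconvex.le_chord_of_mem_Icc_neg hc (hspec hs)

/-- **Operator convexity bound for the matrix exponential**: if `−c·I ≤ y ≤ c·I` and `t > 0`,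
then `exp(t·y) ≤ ((e^{tc} − e^{−tc})/(2c))·y + ((e^{tc} + e^{−tc})/2)·I`. -/
theorem exp_loewner_convexity_bound {d : ℕ} (hd : 1 ≤ d)
    (y : Matrix (Fin d) (Fin d) ℂ) (hy : y.IsHermitian)
    (c t : ℝ) (hc : 0 < c) (ht : 0 < t)
    (hlow : Loewner (-((c : ℂ) • (1 : Matrix (Fin d) (Fin d) ℂ))) y)
    (hupp : Loewner y ((c : ℂ) • (1 : Matrix (Fin d) (Fin d) ℂ))) :
    Loewner (mexp ((t : ℂ) • y))
      ((((Real.exp (t * c) - Real.exp (-(t * c))) / (2 * c) : ℝ) : ℂ) • y +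
        (((Real.exp (t * c) + Real.exp (-(t * c))) / 2 : ℝ) : ℂ) •
          (1 : Matrix (Fin d) (Fin d) ℂ)) :=
  exp_loewner_convexity_bound_general y hy c t hc hlow hupp

end NCAzuma
end

section
/- Single-step Bernstein-type exponential moment bound under a conditional expectation (established in the proofs of Theorem 3.1 and Corollary 3.3). Let E be a conditional expectation on M_d(ℂ), let y ∈ M_d(ℂ) be Hermitian with E(y) = 0, E(y²) ≤ σ²·I for some σ > 0, and y ≤ M·I for some M > 0. Then for every t with 0 < t < 3/M, E(exp(t·y)) ≤ exp(t²σ² / (2·(1 − tM/3)))·I. -/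
namespace NCAzuma

open Matrix
open scoped ComplexOrder

/-!
For `x ≤ b < 3` one has `exp x ≤ 1 + x + c x²` with `c = 3 / (2 (3 - b))`: the function
`g x = 3x²/2 - (3 - x)(exp x - 1 - x)` is convex (`g'' x = 1 + (x - 1) exp x ≥ 0`) with
`g 0 = g' 0 = 0`, so `g ≥ 0`. Since `t • y ≤ tM`, the spectrum of `t • y` lies in `(-∞, tM]`, and
the continuous functional calculus lifts the scalar inequality to
`exp (t y) ≤ 1 + t y + c t² y²`. The positive linear map `E` preserves this order, kills the
linear term and turns `y²` into `E(y²) ≤ σ²`; finally `1 + s ≤ exp s`.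
-/

section Scalar

open Real Set

noncomputable def bernsteinGap (x : ℝ) : ℝ := 3 * x ^ 2 / 2 - (3 - x) * (exp x - 1 - x)

lemma one_add_sub_one_mul_exp_nonneg (x : ℝ) : 0 ≤ 1 + (x - 1) * exp x := by
  have h := mul_le_mul_of_nonneg_right (add_one_le_exp (-x)) (exp_pos x).le
  rw [← exp_add, neg_add_cancel, exp_zero] at h
  linarith

lemma hasDerivAt_bernsteinGap (x : ℝ) :
    HasDerivAt bernsteinGap (x + 2 + (x - 2) * exp x) x := by
  have hquad : HasDerivAt (fun x : ℝ => 3 * x ^ 2 / 2) (3 * x) x :=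
    (((hasDerivAt_pow 2 x).const_mul 3).div_const 2).congr_deriv (by ring)
  have hrem : HasDerivAt (fun x : ℝ => (3 - x) * (exp x - 1 - x))
      (-1 * (exp x - 1 - x) + (3 - x) * (exp x - 1)) x :=
    ((hasDerivAt_id' x).const_sub 3).mul (((hasDerivAt_exp x).sub_const 1).sub (hasDerivAt_id' x))
  exact (hquad.sub hrem).congr_deriv (by ring)

lemma hasDerivAt_bernsteinGap_deriv (x : ℝ) :
    HasDerivAt (fun x => x + 2 + (x - 2) * exp x) (1 + (x - 1) * exp x) x :=
  (((hasDerivAt_id' x).add_const 2).add (((hasDerivAt_id' x).sub_const 2).mul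
    (hasDerivAt_exp x))).congr_deriv (by ring)

lemma convexOn_bernsteinGap : ConvexOn ℝ univ bernsteinGap :=
  convexOn_of_hasDerivWithinAt2_nonneg convex_univ
    (fun x _ => (hasDerivAt_bernsteinGap x).continuousAt.continuousWithinAt)
    (fun x _ => (hasDerivAt_bernsteinGap x).hasDerivWithinAt)
    (fun x _ => (hasDerivAt_bernsteinGap_deriv x).hasDerivWithinAt)
    (fun x _ => one_add_sub_one_mul_exp_nonneg x)

lemma bernsteinGap_nonneg (x : ℝ) : 0 ≤ bernsteinGap x := by
  have hmin : IsMinOn bernsteinGap univ 0 := by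
    refine convexOn_bernsteinGap.isMinOn_of_rightDeriv_eq_zero (by simp) ?_
    rw [(hasDerivAt_bernsteinGap 0).hasDerivWithinAt.derivWithin (uniqueDiffWithinAt_Ioi 0)]
    simp
  simpa [bernsteinGap] using hmin (mem_univ x)

lemma exp_le_one_add_add_mul_sq {b x : ℝ} (hb : b < 3) (hxb : x ≤ b) :
    exp x ≤ 1 + x + 3 / (2 * (3 - b)) * x ^ 2 := by
  have h3x : 0 < 3 - x := by linarith
  have hgap : exp x - 1 - x ≤ 3 * x ^ 2 / (2 * (3 - x)) := by
    have h := bernsteinGap_nonneg x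
    rw [bernsteinGap] at h
    rw [le_div_iff₀ (by positivity)]
    linarith
  have hcoeff : 3 * x ^ 2 / (2 * (3 - x)) ≤ 3 / (2 * (3 - b)) * x ^ 2 := by
    rw [div_mul_eq_mul_div, mul_comm 3]
    exact div_le_div_of_nonneg_left (by positivity) (by linarith) (by linarith)
  linarith

end Scalar

section Operator

open NormedSpace

variable {A : Type*} [NormedRing A] [StarRing A] [NormedAlgebra ℝ A] [PartialOrder A]
  [StarOrderedRing A] [NonnegSpectrumClass ℝ A] [ContinuousFunctionalCalculus ℝ A IsSelfAdjoint]

lemma exp_le_one_add_add_smul_sq {a : A} {b : ℝ} (ha : IsSelfAdjoint a)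
    (hab : a ≤ algebraMap ℝ A b) (hb : b < 3) :
    exp a ≤ 1 + a + (3 / (2 * (3 - b))) • a ^ 2 := by
  have hspec : ∀ x ∈ spectrum ℝ a, x ≤ b := (le_algebraMap_iff_spectrum_le ha).mp hab
  calc exp a = cfc Real.exp a := (CFC.real_exp_eq_normedSpace_exp ha).symm
    _ ≤ cfc (fun x => 1 + x + 3 / (2 * (3 - b)) * x ^ 2) a :=
      cfc_mono fun x hx => exp_le_one_add_add_mul_sq hb (hspec x hx)
    _ = 1 + a + (3 / (2 * (3 - b))) • a ^ 2 := by
      rw [cfc_add .., cfc_add .., cfc_const_one ℝ a, cfc_const_mul .., cfc_pow .., cfc_id' ℝ a]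

end Operator

-- Any norm would do: `NormedSpace.exp` depends only on the topology, the norm is needed by
-- `CFC.real_exp_eq_normedSpace_exp`.
open scoped MatrixOrder Matrix.Norms.L2Operator

namespace CondExp

variable {d : ℕ} (E : CondExp d)

lemma map_sub (x y : Matrix (Fin d) (Fin d) ℂ) : E.toFun (x - y) = E.toFun x - E.toFun y := by
  rw [sub_eq_add_neg, ← neg_one_smul ℂ y, E.map_add, E.map_smul, neg_one_smul, ← sub_eq_add_neg]

lemma map_real_smul (r : ℝ) (x : Matrix (Fin d) (Fin d) ℂ) : E.toFun (r • x) = r • E.toFun x := by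
  rw [← Complex.coe_smul, E.map_smul, Complex.coe_smul]

lemma monotone : Monotone E.toFun := fun x y hxy => by
  rw [Matrix.le_iff, ← E.map_sub]
  exact E.pos _ hxy

end CondExp

theorem condexp_exp_bernstein_bound_general {d : ℕ} (E : CondExp d)
    (y : Matrix (Fin d) (Fin d) ℂ) (hy : y.IsHermitian) (hEy : E.toFun y = 0)
    (σ M : ℝ) (hM : 0 < M)
    (hvar : Loewner (E.toFun (y * y))
      (((σ ^ 2 : ℝ) : ℂ) • (1 : Matrix (Fin d) (Fin d) ℂ)))
    (hupp : Loewner y ((M : ℂ) • (1 : Matrix (Fin d) (Fin d) ℂ)))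
    (t : ℝ) (ht0 : 0 < t) (htM : t < 3 / M) :
    Loewner (E.toFun (mexp ((t : ℂ) • y)))
      (((Real.exp (t ^ 2 * σ ^ 2 / (2 * (1 - t * M / 3))) : ℝ) : ℂ) •
        (1 : Matrix (Fin d) (Fin d) ℂ)) := by
  have hsmul_one (r : ℝ) : ((r : ℂ) • 1 : Matrix (Fin d) (Fin d) ℂ) = algebraMap ℝ _ r := by
    rw [Complex.coe_smul, Algebra.algebraMap_eq_smul_one]
  have htM' : t * M < 3 := by rw [lt_div_iff₀ hM] at htM; linarith
  set c : ℝ := 3 / (2 * (3 - t * M)) with hc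
  have hty : t • y ≤ algebraMap ℝ _ (t * M) := by
    rw [map_mul, Algebra.algebraMap_eq_smul_one t, smul_one_mul, ← hsmul_one]
    exact smul_le_smul_of_nonneg_left hupp ht0.le
  have hexp : mexp ((t : ℂ) • y) ≤ 1 + t • y + c • (t • y) ^ 2 := by
    rw [Complex.coe_smul]
    exact exp_le_one_add_add_smul_sq ((IsSelfAdjoint.all t).smul hy.isSelfAdjoint) hty htM'
  have hexponent : t ^ 2 * σ ^ 2 / (2 * (1 - t * M / 3)) = c * t ^ 2 * σ ^ 2 := by
    rw [hc]; field_simp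
  rw [Loewner, ← Matrix.le_iff, hexponent, hsmul_one]
  calc E.toFun (mexp ((t : ℂ) • y))
      ≤ E.toFun (1 + t • y + c • (t • y) ^ 2) := E.monotone hexp
    _ = 1 + (c * t ^ 2) • E.toFun (y * y) := by
      rw [E.map_add, E.map_add, E.unital, E.map_real_smul, hEy, E.map_real_smul, smul_pow,
        sq y, E.map_real_smul, smul_smul, smul_zero, add_zero]
    _ ≤ 1 + (c * t ^ 2) • algebraMap ℝ _ (σ ^ 2) := by
      rw [hsmul_one] at hvar
      gcongr
      exact hvar
    _ = algebraMap ℝ _ (1 + c * t ^ 2 * σ ^ 2) := by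
      rw [map_add, map_one, map_mul, Algebra.smul_def]
    _ ≤ algebraMap ℝ _ (Real.exp (c * t ^ 2 * σ ^ 2)) :=
      algebraMap_mono _ (by linarith [Real.add_one_le_exp (c * t ^ 2 * σ ^ 2)])

/-- **Single-step Bernstein-type exponential moment bound under a conditional expectation**:
if `E(y) = 0`, `E(y²) ≤ σ²·I` and `y ≤ M·I`, then for `0 < t < 3/M`,
`E(exp(t·y)) ≤ exp(t²σ²/(2(1 − tM/3)))·I`. -/
theorem condexp_exp_bernstein_bound {d : ℕ} (hd : 1 ≤ d) (E : CondExp d)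
    (y : Matrix (Fin d) (Fin d) ℂ) (hy : y.IsHermitian) (hEy : E.toFun y = 0)
    (σ M : ℝ) (hσ : 0 < σ) (hM : 0 < M)
    (hvar : Loewner (E.toFun (y * y))
      (((σ ^ 2 : ℝ) : ℂ) • (1 : Matrix (Fin d) (Fin d) ℂ)))
    (hupp : Loewner y ((M : ℂ) • (1 : Matrix (Fin d) (Fin d) ℂ)))
    (t : ℝ) (ht0 : 0 < t) (htM : t < 3 / M) :
    Loewner (E.toFun (mexp ((t : ℂ) • y)))
      (((Real.exp (t ^ 2 * σ ^ 2 / (2 * (1 - t * M / 3))) : ℝ) : ℂ) •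
        (1 : Matrix (Fin d) (Fin d) ℂ)) :=
  condexp_exp_bernstein_bound_general E y hy hEy σ M hM hvar hupp t ht0 htM

end NCAzuma
end
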